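/- Let f ∈ ℂ{x}[y] be an irreducible Weierstrass polynomial of degree n with a Newton–Puiseux root γ(x) = Σ_{i≥1} a_i x^{i/n}. Then the full set of Newton–Puiseux roots of f is {γ_j(x) = Σ_i a_i ω^{(j-1)i} x^{i/n} : 1 ≤ j ≤ n}, where ω is a primitive n-th root of unity. -/

import Mathlib

/-!
Write `γ = p(x^(1/n))` with `p ∈ ℂ⟦t⟧`. The substitution `x^(1/n) ↦ ω^j x^(1/n)` becomes
`t ↦ ω^j t`, which fixes `ℂ⟦x⟧ = ℂ⟦t^n⟧`. Hence `∏_{j<n} (y - p(ω^j t))` is invariant under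
`t ↦ ω t`, so it is a monic polynomial `g` of degree `n` over `ℂ⟦x⟧`, and it has the root `γ`.
As `ℂ⟦x⟧` is integrally closed and `f` is irreducible, `f` is the minimal polynomial of `γ`;
so `f ∣ g`, whence `f = g`, whose roots are the `n` twists of `γ`.
-/

noncomputable section

open Polynomial

/-- The substitution `x^{1/n} ↦ ε·x^{1/n}` on fractional power series: it sends
`Σ a_{i} x^{i/n}` to `Σ a_{i} ε^{i} x^{i/n}` (here the exponent of `ε` at `x^q`
is the integer `q·n`). -/
def twist (n : ℕ) (ε : ℂ) (γ : HahnSeries ℚ ℂ) : HahnSeries ℚ ℂ where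
  coeff q := ε ^ (q * n : ℚ).num * γ.coeff q
  isPWO_support' := γ.isPWO_support.mono (by
    intro q hq
    simp only [Function.mem_support] at hq ⊢
    intro h
    simp [h] at hq)

theorem Finset.prod_range_succ_comp_eq_of_eq {M : Type*} [CommMonoid M] (f : ℕ → M) {n : ℕ}
    (h : f n = f 0) : ∏ j ∈ Finset.range n, f (j + 1) = ∏ j ∈ Finset.range n, f j := by
  cases n with
  | zero => simp
  | succ n => rw [Finset.prod_range_succ, h, Finset.prod_range_succ' f, mul_comm]

theorem Polynomial.Monic.eq_of_irreducible_of_aeval_eq_zero {R S : Type*} [CommRing R]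
    [IsDomain R] [IsIntegrallyClosed R] [CommRing S] [IsDomain S] [Algebra R S]
    [Module.IsTorsionFree R S] {f g : R[X]} (hf : f.Monic) (hirr : Irreducible f) (hg : g.Monic)
    (hdeg : g.natDegree ≤ f.natDegree) {s : S} (hfs : aeval s f = 0) (hgs : aeval s g = 0) :
    g = f := by
  have hs : IsIntegral R s := ⟨f, hf, hfs⟩
  have hf_dvd : f ∣ minpoly R s :=
    (minpoly.prime_of_isIntegrallyClosed hs).irreducible.dvd_symm hirr
      (minpoly.isIntegrallyClosed_dvd hs hfs)
  exact eq_of_monic_of_dvd_of_natDegree_le hf hg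
    (hf_dvd.trans (minpoly.isIntegrallyClosed_dvd hs hgs)) hdeg

namespace PowerSeries

variable {R : Type*} [CommRing R]

theorem mem_range_expand_of_rescale_eq_self [IsDomain R] {n : ℕ} [NeZero n] {ω : R}
    (hω : IsPrimitiveRoot ω n) {c : PowerSeries R} (hc : rescale ω c = c) :
    c ∈ Set.range (expand n (NeZero.ne n)) := by
  refine ⟨mk fun k => coeff (n * k) c, ?_⟩
  ext k
  rw [coeff_expand]
  split_ifs with hk
  · rw [coeff_mk, Nat.mul_div_cancel' hk]
  · have hωk : ω ^ k ≠ 1 := fun h => hk ((hω.pow_eq_one_iff_dvd k).1 h)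
    have hfix : ω ^ k * coeff k c = coeff k c := by rw [← coeff_rescale, hc]
    have hzero : (ω ^ k - 1) * coeff k c = 0 := by rw [sub_mul, hfix, one_mul, sub_self]
    exact ((mul_eq_zero.1 hzero).resolve_left (sub_ne_zero.2 hωk)).symm

def rescaleOrbitPoly (n : ℕ) (ω : R) (p : PowerSeries R) : (PowerSeries R)[X] :=
  ∏ j ∈ Finset.range n, (Polynomial.X - Polynomial.C (rescale (ω ^ j) p))

theorem rescaleOrbitPoly_monic (n : ℕ) (ω : R) (p : PowerSeries R) :
    (rescaleOrbitPoly n ω p).Monic :=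
  monic_prod_of_monic _ _ fun _ _ => monic_X_sub_C _

theorem natDegree_rescaleOrbitPoly [Nontrivial R] (n : ℕ) (ω : R) (p : PowerSeries R) :
    (rescaleOrbitPoly n ω p).natDegree = n := by
  rw [rescaleOrbitPoly, natDegree_prod_of_monic _ _ fun _ _ => monic_X_sub_C _]
  simp

theorem map_rescale_rescaleOrbitPoly {n : ℕ} {ω : R} (hω : ω ^ n = 1) (p : PowerSeries R) :
    (rescaleOrbitPoly n ω p).map (rescale ω) = rescaleOrbitPoly n ω p := by
  have hstep (j : ℕ) : rescale ω (rescale (ω ^ j) p) = rescale (ω ^ (j + 1)) p := by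
    rw [← RingHom.comp_apply, ← rescale_mul, pow_succ]
  simp only [rescaleOrbitPoly, Polynomial.map_prod, Polynomial.map_sub, Polynomial.map_X,
    Polynomial.map_C, hstep]
  exact Finset.prod_range_succ_comp_eq_of_eq
    (fun j => Polynomial.X - Polynomial.C (rescale (ω ^ j) p)) (by rw [hω, pow_zero])

theorem exists_map_expand_eq_rescaleOrbitPoly [IsDomain R] {n : ℕ} [NeZero n] {ω : R}
    (hω : IsPrimitiveRoot ω n) (p : PowerSeries R) :
    ∃ g : (PowerSeries R)[X], g.map (expand n (NeZero.ne n)).toRingHom = rescaleOrbitPoly n ω p ∧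
      g.Monic ∧ g.natDegree = n := by
  have hlifts : rescaleOrbitPoly n ω p ∈ lifts (expand n (NeZero.ne n)).toRingHom := by
    refine (lifts_iff_coeff_lifts _).2 fun k => mem_range_expand_of_rescale_eq_self hω ?_
    conv_rhs => rw [← map_rescale_rescaleOrbitPoly hω.pow_eq_one p]
    rw [Polynomial.coeff_map]
  obtain ⟨g, hg, hdeg, hmonic⟩ :=
    lifts_and_natDegree_eq_and_monic hlifts (rescaleOrbitPoly_monic ..)
  exact ⟨g, hg, hmonic, hdeg.trans (natDegree_rescaleOrbitPoly ..)⟩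

end PowerSeries

namespace HahnSeries

variable {R : Type*} (m : ℕ) [NeZero m]

def divNatAddMonoidHom : ℕ →+ ℚ where
  toFun k := (k : ℚ) / m
  map_zero' := by simp
  map_add' a b := by push_cast; ring

theorem divNatAddMonoidHom_le_iff (a b : ℕ) :
    divNatAddMonoidHom m a ≤ divNatAddMonoidHom m b ↔ a ≤ b := by
  simp [divNatAddMonoidHom, div_le_div_iff_of_pos_right, NeZero.pos]

/-- A power series in `t`, read as a Hahn series in `x` through `t = x^(1/m)`. -/
def ofPowerSeriesRoot [Semiring R] : PowerSeries R →+* HahnSeries ℚ R :=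
  (embDomainRingHom (divNatAddMonoidHom m)
      (fun a b h => le_antisymm ((divNatAddMonoidHom_le_iff m a b).1 h.le)
        ((divNatAddMonoidHom_le_iff m b a).1 h.ge))
      (divNatAddMonoidHom_le_iff m)).comp
    toPowerSeries.symm.toRingHom

variable {m}

theorem coeff_ofPowerSeriesRoot_natCast_div [Semiring R] (p : PowerSeries R) (k : ℕ) :
    (ofPowerSeriesRoot m p).coeff ((k : ℚ) / m) = PowerSeries.coeff k p :=
  embDomain_coeff (a := k)

theorem coeff_ofPowerSeriesRoot_of_notMem [Semiring R] (p : PowerSeries R) {q : ℚ}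
    (hq : q ∉ Set.range fun k : ℕ => (k : ℚ) / m) : (ofPowerSeriesRoot m p).coeff q = 0 :=
  embDomain_of_notMem_range hq

theorem exists_ofPowerSeriesRoot_eq [Semiring R] (x : HahnSeries ℚ R)
    (hx : x.support ⊆ Set.range fun k : ℕ => (k : ℚ) / m) :
    ∃ p, ofPowerSeriesRoot m p = x := by
  refine ⟨PowerSeries.mk fun k => x.coeff ((k : ℚ) / m), ?_⟩
  ext q
  by_cases hq : q ∈ Set.range fun k : ℕ => (k : ℚ) / m
  · obtain ⟨k, rfl⟩ := hq
    rw [coeff_ofPowerSeriesRoot_natCast_div, PowerSeries.coeff_mk]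
  · rw [coeff_ofPowerSeriesRoot_of_notMem _ hq, eq_comm]
    by_contra h
    exact hq (hx h)

variable (m) in
theorem ofPowerSeriesRoot_comp_expand [CommRing R] :
    (ofPowerSeriesRoot m).comp (PowerSeries.expand m (NeZero.ne m)).toRingHom =
      ofPowerSeries ℚ R := by
  refine RingHom.ext fun p => ?_
  change ofPowerSeriesRoot m (PowerSeries.expand m _ p) = _
  ext q
  by_cases hq : q ∈ Set.range fun k : ℕ => (k : ℚ) / m
  · obtain ⟨k, rfl⟩ := hq
    dsimp only
    rw [coeff_ofPowerSeriesRoot_natCast_div, PowerSeries.coeff_expand]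
    split_ifs with hk
    · obtain ⟨j, rfl⟩ := hk
      rw [Nat.mul_div_cancel_left _ (NeZero.pos m), Nat.cast_mul,
        mul_div_cancel_left₀ _ (NeZero.ne (m : ℚ)), ofPowerSeries_apply_coeff]
    · rw [ofPowerSeries_apply, embDomain_of_notMem_range]
      rintro ⟨j, hj⟩
      refine hk ⟨j, ?_⟩
      rw [Nat.castOrderEmbedding_apply, eq_div_iff (NeZero.ne (m : ℚ))] at hj
      exact_mod_cast hj.symm.trans (mul_comm _ _)
  · rw [coeff_ofPowerSeriesRoot_of_notMem _ hq, ofPowerSeries_apply, embDomain_of_notMem_range]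
    rintro ⟨j, rfl⟩
    exact hq ⟨m * j, by simp [NeZero.ne]⟩

theorem twist_ofPowerSeriesRoot (ε : ℂ) (p : PowerSeries ℂ) :
    twist m ε (ofPowerSeriesRoot m p) = ofPowerSeriesRoot m (PowerSeries.rescale ε p) := by
  ext q
  by_cases hq : q ∈ Set.range fun k : ℕ => (k : ℚ) / m
  · obtain ⟨k, rfl⟩ := hq
    simp [twist, coeff_ofPowerSeriesRoot_natCast_div, PowerSeries.coeff_rescale, NeZero.ne]
  · simp [twist, coeff_ofPowerSeriesRoot_of_notMem _ hq]

theorem map_ofPowerSeriesRoot_rescaleOrbitPoly (ω : ℂ) (p : PowerSeries ℂ) :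
    (p.rescaleOrbitPoly m ω).map (ofPowerSeriesRoot m) =
      ∏ j ∈ Finset.range m, (X - Polynomial.C (twist m (ω ^ j) (ofPowerSeriesRoot m p))) := by
  simp only [PowerSeries.rescaleOrbitPoly, Polynomial.map_prod, Polynomial.map_sub, map_X,
    Polynomial.map_C, twist_ofPowerSeriesRoot]

instance {Γ : Type*} [Semiring Γ] [LinearOrder Γ] [IsStrictOrderedRing Γ] [CommRing R]
    [IsDomain R] : Module.IsTorsionFree (PowerSeries R) (HahnSeries Γ R) :=
  Module.isTorsionFree_iff_algebraMap_injective.2 ofPowerSeries_injective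

end HahnSeries

theorem newton_puiseux_roots_cycle_general (n : ℕ) (hn : 0 < n)
    (f : Polynomial (PowerSeries ℂ)) (hmonic : f.Monic) (hdeg : f.natDegree = n)
    (hirr : Irreducible f)
    (γ : HahnSeries ℚ ℂ)
    (hγsupp : γ.support ⊆ {q : ℚ | ∃ i : ℕ, 1 ≤ i ∧ q = (i : ℚ) / n})
    (hγ : Polynomial.eval₂ (HahnSeries.ofPowerSeries ℚ ℂ) γ f = 0)
    (ω : ℂ) (hω : IsPrimitiveRoot ω n) :
    ∀ δ : HahnSeries ℚ ℂ,
      Polynomial.eval₂ (HahnSeries.ofPowerSeries ℚ ℂ) δ f = 0 ↔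
        ∃ j, j < n ∧ δ = twist n (ω ^ j) γ := by
  have : NeZero n := ⟨hn.ne'⟩
  obtain ⟨p, rfl⟩ := HahnSeries.exists_ofPowerSeriesRoot_eq γ fun q hq =>
    let ⟨i, _, hi⟩ := hγsupp hq; ⟨i, hi.symm⟩
  obtain ⟨g, hg_map, hg_monic, hg_deg⟩ := PowerSeries.exists_map_expand_eq_rescaleOrbitPoly hω p
  have hg_roots (δ : HahnSeries ℚ ℂ) : eval₂ (HahnSeries.ofPowerSeries ℚ ℂ) δ g = 0 ↔
      ∃ j, j < n ∧ δ = twist n (ω ^ j) (HahnSeries.ofPowerSeriesRoot n p) := by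
    rw [eval₂_eq_eval_map, ← HahnSeries.ofPowerSeriesRoot_comp_expand n, ← map_map, hg_map,
      HahnSeries.map_ofPowerSeriesRoot_rescaleOrbitPoly, eval_prod, Finset.prod_eq_zero_iff]
    simp [sub_eq_zero]
  have hg_eq : g = f := hmonic.eq_of_irreducible_of_aeval_eq_zero hirr hg_monic
    (hg_deg.trans hdeg.symm).le hγ ((hg_roots _).2 ⟨0, hn, by simp [twist]⟩)
  intro δ
  rw [← hg_eq]
  exact hg_roots δ

/-- Let `f ∈ ℂ{x}[y]` (formally: `f` a polynomial over formal power series) be an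
irreducible Weierstrass polynomial of degree `n` with a Newton–Puiseux root
`γ = Σ_{i≥1} a_i x^{i/n}`.  Then the Newton–Puiseux roots of `f` are exactly the series
obtained from `γ` by the substitutions `x^{1/n} ↦ ω^j x^{1/n}`, `0 ≤ j < n`, where `ω` is
a primitive `n`-th root of unity. -/
theorem newton_puiseux_roots_cycle (n : ℕ) (hn : 0 < n)
    (f : Polynomial (PowerSeries ℂ)) (hmonic : f.Monic) (hdeg : f.natDegree = n)
    (hW : ∀ j, j < n → PowerSeries.constantCoeff (f.coeff j) = 0)
    (hirr : Irreducible f)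
    (γ : HahnSeries ℚ ℂ)
    (hγsupp : γ.support ⊆ {q : ℚ | ∃ i : ℕ, 1 ≤ i ∧ q = (i : ℚ) / n})
    (hγ : Polynomial.eval₂ (HahnSeries.ofPowerSeries ℚ ℂ) γ f = 0)
    (ω : ℂ) (hω : IsPrimitiveRoot ω n) :
    ∀ δ : HahnSeries ℚ ℂ,
      Polynomial.eval₂ (HahnSeries.ofPowerSeries ℚ ℂ) δ f = 0 ↔
        ∃ j, j < n ∧ δ = twist n (ω ^ j) γ :=
  newton_puiseux_roots_cycle_general n hn f hmonic hdeg hirr γ hγsupp hγ ω hω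

end
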